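/- arXiv:1612.07478 — 2 statements merged into one kernel-verified Lean document; each statement's English description precedes it below -/
import Mathlib

section
/- Let d ≥ 1 and c, C > 0. For all x, y ∈ ℝ^d and all s < t, ∫_s^t ∫_{ℝ^d} (t−r)^{−1/2} g_{c,C}(x−ζ, t−r) · (r−s)^{−1/2} g_{c,C}(ζ−y, r−s) dζ dr = π c (π/C)^{d/2} · g_{c,C}(x−y, t−s). -/
/-!
Shifting the space variable to the point `(a • y + b • x) / (a + b)` and completing the square
turns the spatial integral of `g(x - ζ, a) g(ζ - y, b)` into `g(x - y, a + b)` times a Gaussian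
integral, which contributes `c (π / C)^{d/2}`. Since `(t - r) + (r - s) = t - s`, what remains of
the time integral is the Beta integral `B(1/2, 1/2) = Γ(1/2)² = π`.
-/

open MeasureTheory Real

/-- The Gaussian kernel `g_{c,C}(x,t) = c · t^{-d/2} · exp(-C|x|²/t)`. -/
noncomputable def gker (d : ℕ) (c C : ℝ) (x : EuclideanSpace ℝ (Fin d)) (t : ℝ) : ℝ :=
  c / t ^ ((d : ℝ) / 2) * Real.exp (-C * ‖x‖ ^ 2 / t)

lemma ProbabilityTheory.beta_half_half : ProbabilityTheory.beta (1 / 2) (1 / 2) = π := by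
  rw [ProbabilityTheory.beta, Real.Gamma_one_half_eq, add_halves, Real.Gamma_one,
    Real.mul_self_sqrt pi_pos.le, div_one]

lemma Complex.betaIntegral_ofReal {p q : ℝ} (hp : 0 < p) (hq : 0 < q) :
    Complex.betaIntegral p q = ProbabilityTheory.beta p q := by
  rw [Complex.betaIntegral_eq_Gamma_mul_div _ _ (by simpa) (by simpa), ← Complex.ofReal_add,
    Complex.Gamma_ofReal, Complex.Gamma_ofReal, Complex.Gamma_ofReal, ProbabilityTheory.beta]
  norm_cast

lemma integral_rpow_mul_sub_rpow {p q a : ℝ} (hp : 0 < p) (hq : 0 < q) (ha : 0 < a) :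
    ∫ x in 0..a, x ^ (p - 1) * (a - x) ^ (q - 1)
      = a ^ (p + q - 1) * ProbabilityTheory.beta p q := by
  apply Complex.ofReal_injective
  push_cast
  rw [← Complex.betaIntegral_ofReal hp hq, Complex.ofReal_cpow ha.le,
    ← intervalIntegral.integral_ofReal]
  push_cast
  rw [← Complex.betaIntegral_scaled p q ha]
  refine intervalIntegral.integral_congr fun x hx => ?_
  rw [Set.uIcc_of_le ha.le] at hx
  push_cast [Complex.ofReal_cpow hx.1, Complex.ofReal_cpow (sub_nonneg.2 hx.2)]
  rfl

lemma integral_sub_rpow_neg_half_mul_sub_rpow_neg_half {s t : ℝ} (hst : s < t) :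
    ∫ r in s..t, (t - r) ^ (-(1 : ℝ) / 2) * (r - s) ^ (-(1 : ℝ) / 2) = π := by
  have beta := integral_rpow_mul_sub_rpow one_half_pos one_half_pos (sub_pos.2 hst)
  rw [add_halves, sub_self, rpow_zero, one_mul, ProbabilityTheory.beta_half_half,
    show (1 / 2 : ℝ) - 1 = -1 / 2 by norm_num] at beta
  have shift := intervalIntegral.integral_comp_sub_right
    (fun x => x ^ (-(1 : ℝ) / 2) * (t - s - x) ^ (-(1 : ℝ) / 2)) (a := s) (b := t) s
  simp only [sub_self, sub_sub_sub_cancel_right] at shift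
  simp_rw [← beta, ← shift, mul_comm]

lemma norm_sq_div_add_norm_sq_div {E : Type*} [NormedAddCommGroup E] [InnerProductSpace ℝ E]
    {a b : ℝ} (ha : 0 < a) (hb : 0 < b) (u w : E) :
    ‖(a / (a + b)) • w - u‖ ^ 2 / a + ‖u + (b / (a + b)) • w‖ ^ 2 / b
      = ‖w‖ ^ 2 / (a + b) + (a + b) / (a * b) * ‖u‖ ^ 2 := by
  rw [norm_sub_sq_real, norm_add_sq_real, real_inner_smul_left, real_inner_smul_right,
    real_inner_comm u w, norm_smul, norm_smul, Real.norm_of_nonneg (by positivity),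
    Real.norm_of_nonneg (by positivity)]
  field_simp
  ring

section GaussianConvolution

variable {d : ℕ} {c C a b : ℝ}

lemma gker_mul_gker_eq (ha : 0 < a) (hb : 0 < b) (u w : EuclideanSpace ℝ (Fin d)) :
    gker d c C ((a / (a + b)) • w - u) a * gker d c C (u + (b / (a + b)) • w) b
      = c ^ 2 / (a ^ ((d : ℝ) / 2) * b ^ ((d : ℝ) / 2)) * exp (-C * ‖w‖ ^ 2 / (a + b))
        * exp (-(C * (a + b) / (a * b)) * ‖u‖ ^ 2) := by
  have hexp : -C * ‖(a / (a + b)) • w - u‖ ^ 2 / a + -C * ‖u + (b / (a + b)) • w‖ ^ 2 / b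
      = -C * ‖w‖ ^ 2 / (a + b) + -(C * (a + b) / (a * b)) * ‖u‖ ^ 2 := by
    rw [mul_div_assoc, mul_div_assoc, ← mul_add, norm_sq_div_add_norm_sq_div ha hb]
    ring
  rw [gker, gker, mul_mul_mul_comm, ← exp_add, hexp, exp_add]
  ring

lemma integral_gker_mul_gker (hC : 0 < C) (ha : 0 < a) (hb : 0 < b)
    (x y : EuclideanSpace ℝ (Fin d)) :
    ∫ ζ, gker d c C (x - ζ) a * gker d c C (ζ - y) b
      = c * (π / C) ^ ((d : ℝ) / 2) * gker d c C (x - y) (a + b) := by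
  have hab : 0 < a + b := add_pos ha hb
  set m := (a / (a + b)) • y + (b / (a + b)) • x
  have hx : ∀ u, x - (u + m) = (a / (a + b)) • (x - y) - u := fun u => by
    match_scalars <;> grind
  have hy : ∀ u, u + m - y = u + (b / (a + b)) • (x - y) := fun u => by
    match_scalars <;> grind
  have hvol : (π / (C * (a + b) / (a * b))) ^ ((d : ℝ) / 2)
      = (π / C) ^ ((d : ℝ) / 2) * a ^ ((d : ℝ) / 2) * b ^ ((d : ℝ) / 2)
        / (a + b) ^ ((d : ℝ) / 2) := by
    rw [← mul_rpow (by positivity) ha.le, ← mul_rpow (by positivity) hb.le,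
      ← div_rpow (by positivity) hab.le]
    congr 1
    field_simp
  rw [← integral_add_right_eq_self _ m]
  simp only [hx, hy, gker_mul_gker_eq ha hb]
  rw [integral_const_mul, GaussianFourier.integral_rexp_neg_mul_sq_norm (by positivity),
    finrank_euclideanSpace_fin, hvol, gker]
  field_simp

end GaussianConvolution

theorem stmt5_general (d : ℕ) (c C : ℝ) (hC : 0 < C)
    (x y : EuclideanSpace ℝ (Fin d)) (s t : ℝ) (hst : s < t) :
    (∫ r in s..t, ∫ ζ : EuclideanSpace ℝ (Fin d),
        ((t - r) ^ (-(1 : ℝ) / 2) * gker d c C (x - ζ) (t - r)) *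
          ((r - s) ^ (-(1 : ℝ) / 2) * gker d c C (ζ - y) (r - s)))
      = Real.pi * c * (Real.pi / C) ^ ((d : ℝ) / 2) * gker d c C (x - y) (t - s) := by
  set K := c * (π / C) ^ ((d : ℝ) / 2) * gker d c C (x - y) (t - s)
  have hspace : ∀ r ∈ Set.uIoc s t,
      ∫ ζ, ((t - r) ^ (-(1 : ℝ) / 2) * gker d c C (x - ζ) (t - r)) *
          ((r - s) ^ (-(1 : ℝ) / 2) * gker d c C (ζ - y) (r - s))
        = (t - r) ^ (-(1 : ℝ) / 2) * (r - s) ^ (-(1 : ℝ) / 2) * K := by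
    rw [Set.uIoc_of_le hst.le]
    rintro r ⟨hsr, hrt⟩
    rcases hrt.eq_or_lt with rfl | hrt
    · -- `0 ^ (-1/2) = 0` in Lean, so both sides vanish at the endpoint `r = t`.
      simp [zero_rpow (by norm_num : -(1 : ℝ) / 2 ≠ 0)]
    · simp_rw [mul_mul_mul_comm _ (gker _ _ _ _ _), integral_const_mul,
        integral_gker_mul_gker hC (sub_pos.2 hrt) (sub_pos.2 hsr), sub_add_sub_cancel]
      rfl
  rw [intervalIntegral.integral_congr_ae (.of_forall hspace), intervalIntegral.integral_mul_const,
    integral_sub_rpow_neg_half_mul_sub_rpow_neg_half hst]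
  ring

/-- Space-time convolution identity for Gaussian kernels with square-root time
singularities, combining the Gaussian Chapman–Kolmogorov property with the Beta
integral `∫_s^t (t-r)^{-1/2}(r-s)^{-1/2} dr = π`. -/
theorem stmt5 (d : ℕ) (hd : 1 ≤ d) (c C : ℝ) (hc : 0 < c) (hC : 0 < C)
    (x y : EuclideanSpace ℝ (Fin d)) (s t : ℝ) (hst : s < t) :
    (∫ r in s..t, ∫ ζ : EuclideanSpace ℝ (Fin d),
        ((t - r) ^ (-(1 : ℝ) / 2) * gker d c C (x - ζ) (t - r)) *
          ((r - s) ^ (-(1 : ℝ) / 2) * gker d c C (ζ - y) (r - s)))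
      = Real.pi * c * (Real.pi / C) ^ ((d : ℝ) / 2) * gker d c C (x - y) (t - s) :=
  stmt5_general d c C hC x y s t hst
end

section
/- Let d ≥ 1, λ ∈ (0,1], and let a : ℝ^d → (real symmetric d×d matrices) be smooth, ℤ^d-periodic, and uniformly elliptic: λ|ζ|² ≤ ⟨a(z)ζ,ζ⟩ ≤ λ⁻¹|ζ|² for all z, ζ ∈ ℝ^d. Let ξ ∈ ℝ^d and let χ : ℝ^d → ℝ be a smooth ℤ^d-periodic function satisfying div(a(z)(∇χ(z) + ξ)) = 0 for all z ∈ ℝ^d. Then ∫_{[0,1]^d} ⟨a(z)(∇χ(z) + ξ), ξ⟩ dz = ∫_{[0,1]^d} ⟨a(z)(∇χ(z) + ξ), ∇χ(z) + ξ⟩ dz ≥ λ |ξ|². -/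
open MeasureTheory Real

/-- The unit cell `[0,1]^d` in Euclidean space. -/
def unitCell (d : ℕ) : Set (EuclideanSpace ℝ (Fin d)) :=
  {z | ∀ i, z i ∈ Set.Icc (0 : ℝ) 1}

section Aux

open Set Function


lemma insertNth_one_eq {n : ℕ} (i : Fin (n+1)) (x : Fin n → ℝ) :
    i.insertNth (1:ℝ) x = (i.insertNth (0:ℝ) x + Pi.single i 1 : Fin (n+1) → ℝ) := by
  funext j
  rcases eq_or_ne j i with rfl | h
  · simp
  · obtain ⟨k, rfl⟩ := Fin.exists_succAbove_eq h
    simp [Pi.single_eq_of_ne (Fin.succAbove_ne i k)]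

lemma pi_div_integral_zero {n : ℕ} (F : Fin (n+1) → ((Fin (n+1) → ℝ) → ℝ))
    (hF : ∀ i, ContDiff ℝ (⊤ : ℕ∞) (F i))
    (hper : ∀ i x, F i (x + Pi.single i 1) = F i x) :
    ∫ x in Set.Icc (0 : Fin (n+1) → ℝ) 1, ∑ i, fderiv ℝ (F i) x (Pi.single i 1) = 0 := by
  have hdiff : ∀ i, Differentiable ℝ (F i) := fun i => (hF i).differentiable (by simp)
  have hcont : Continuous fun x => ∑ i, fderiv ℝ (F i) x (Pi.single i 1) := by
    refine continuous_finset_sum _ fun i _ => ?_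
    exact (ContinuousLinearMap.apply ℝ ℝ (Pi.single i 1)).continuous.comp
      ((hF i).continuous_fderiv (by simp))
  have key := MeasureTheory.integral_divergence_of_hasFDerivAt_off_countable
    (a := (0 : Fin (n+1) → ℝ)) (b := 1) (fun i => zero_le_one)
    (fun x i => F i x) (fun x => ContinuousLinearMap.pi fun i => fderiv ℝ (F i) x)
    ∅ Set.countable_empty
    ((continuous_pi fun i => (hF i).continuous).continuousOn)
    (fun x _ => hasFDerivAt_pi.2 fun i => (hdiff i x).hasFDerivAt)
    (by
      simp only [ContinuousLinearMap.pi_apply]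
      exact hcont.continuousOn.integrableOn_compact isCompact_Icc)
  simp only [ContinuousLinearMap.pi_apply] at key
  rw [key]
  refine Finset.sum_eq_zero fun i _ => ?_
  rw [sub_eq_zero]
  refine setIntegral_congr_fun ?_ fun x _ => ?_
  · exact measurableSet_Icc
  · show F i (i.insertNth ((1 : Fin (n+1) → ℝ) i) x) = F i (i.insertNth ((0 : Fin (n+1) → ℝ) i) x)
    simp only [Pi.one_apply, Pi.zero_apply, insertNth_one_eq, hper]


lemma unitCell_preimage (d : ℕ) :
    (⇑(MeasurableEquiv.toLp 2 (Fin d → ℝ)).symm.symm) ⁻¹' unitCell d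
      = Set.Icc (0 : Fin d → ℝ) 1 := by
  ext x
  simp only [Set.mem_preimage, unitCell, Set.mem_setOf_eq, Set.mem_Icc, Pi.le_def]
  exact ⟨fun h => ⟨fun i => (h i).1, fun i => (h i).2⟩, fun h i => ⟨h.1 i, h.2 i⟩⟩

lemma cell_div_integral_zero {d : ℕ} (hd : 1 ≤ d)
    (F : Fin d → (EuclideanSpace ℝ (Fin d) → ℝ))
    (hF : ∀ i, ContDiff ℝ (⊤ : ℕ∞) (F i))
    (hper : ∀ i z, F i (z + EuclideanSpace.single i 1) = F i z) :
    ∫ z in unitCell d, ∑ i, fderiv ℝ (F i) z (EuclideanSpace.single i 1) = 0 := by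
  obtain ⟨n, rfl⟩ : ∃ n, d = n + 1 := ⟨d - 1, (Nat.succ_pred_eq_of_pos hd).symm⟩
  set ψ := (MeasurableEquiv.toLp 2 (Fin (n+1) → ℝ)).symm.symm with hψ
  have hmp : MeasurePreserving ψ :=
    PiLp.volume_preserving_toLp (Fin (n+1))
  have htrans := hmp.setIntegral_preimage_emb ψ.measurableEmbedding
    (fun z => ∑ i, fderiv ℝ (F i) z (EuclideanSpace.single i 1)) (unitCell (n+1))
  rw [← htrans, unitCell_preimage]
  -- the continuous linear equiv (identity map)
  set L : (Fin (n+1) → ℝ) ≃L[ℝ] EuclideanSpace ℝ (Fin (n+1)) :=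
    (PiLp.continuousLinearEquiv 2 ℝ (fun _ : Fin (n+1) => ℝ)).symm with hL
  have hLψ : ∀ x, ψ x = L x := fun _ => rfl
  have hfd : ∀ i x, HasFDerivAt (fun x => F i (L x))
      ((fderiv ℝ (F i) (L x)).comp (L : (Fin (n+1) → ℝ) →L[ℝ] EuclideanSpace ℝ (Fin (n+1)))) x :=
    fun i x => (((hF i).differentiable (by simp) (L x)).hasFDerivAt).comp x L.hasFDerivAt
  have key := pi_div_integral_zero (fun i x => F i (L x))
    (fun i => (hF i).comp L.contDiff)
    (fun i x => by
      have : L (x + Pi.single i 1) = L x + EuclideanSpace.single i 1 := by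
        rw [map_add]
        congr 1
      show F i (L (x + Pi.single i 1)) = F i (L x)
      rw [this, hper])
  rw [← key]
  refine setIntegral_congr_fun measurableSet_Icc fun x _ => ?_
  refine Finset.sum_congr rfl fun i _ => ?_
  rw [hLψ, (hfd i x).fderiv]
  rfl


lemma unitCell_preimage' (d : ℕ) :
    (⇑(MeasurableEquiv.toLp 2 (Fin d → ℝ)).symm) ⁻¹' Set.Icc (0 : Fin d → ℝ) 1
      = unitCell d := by
  ext x
  simp only [Set.mem_preimage, unitCell, Set.mem_setOf_eq, Set.mem_Icc, Pi.le_def]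
  exact ⟨fun h i => ⟨h.1 i, h.2 i⟩, fun h => ⟨fun i => (h i).1, fun i => (h i).2⟩⟩

lemma volume_unitCell (d : ℕ) : volume (unitCell d) = 1 := by
  rw [← unitCell_preimage' d, MeasurableEquiv.coe_toLp_symm,
    (PiLp.volume_preserving_ofLp (Fin d)).measure_preimage
      measurableSet_Icc.nullMeasurableSet]
  simp [Real.volume_Icc_pi]

lemma isCompact_unitCell (d : ℕ) : IsCompact (unitCell d) := by
  rw [← unitCell_preimage' d]
  have : ⇑(MeasurableEquiv.toLp 2 (Fin d → ℝ)).symm =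
      ⇑(PiLp.continuousLinearEquiv 2 ℝ (fun _ : Fin d => ℝ)) := rfl
  rw [this]
  exact (PiLp.continuousLinearEquiv 2 ℝ (fun _ : Fin d => ℝ)).toHomeomorph.isCompact_preimage.2
    isCompact_Icc

lemma measurableSet_unitCell (d : ℕ) : MeasurableSet (unitCell d) :=
  (isCompact_unitCell d).isClosed.measurableSet

lemma integrableOn_unitCell {d : ℕ} {f : EuclideanSpace ℝ (Fin d) → ℝ} (hf : Continuous f) :
    IntegrableOn f (unitCell d) :=
  hf.continuousOn.integrableOn_compact (isCompact_unitCell d)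

lemma gradient_coord {d : ℕ} (f : EuclideanSpace ℝ (Fin d) → ℝ) (z : EuclideanSpace ℝ (Fin d))
    (j : Fin d) : gradient f z j = fderiv ℝ f z (EuclideanSpace.single j 1) := by
  have h : (inner ℝ (gradient f z) (EuclideanSpace.single j (1:ℝ)) : ℝ)
      = fderiv ℝ f z (EuclideanSpace.single j 1) := by
    rw [gradient, InnerProductSpace.toDual_symm_apply]
  rw [EuclideanSpace.inner_single_right] at h
  simpa using h

lemma fderiv_periodic {d : ℕ} {f : EuclideanSpace ℝ (Fin d) → ℝ} (hf : Differentiable ℝ f)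
    (c : EuclideanSpace ℝ (Fin d)) (h : ∀ z, f (z + c) = f z) (z : EuclideanSpace ℝ (Fin d)) :
    fderiv ℝ f (z + c) = fderiv ℝ f z := by
  have h1 : (fun w => f (w + c)) = f := funext h
  have h2 : HasFDerivAt (fun w => f (w + c)) (fderiv ℝ f (z + c)) z := by
    have := (hf (z + c)).hasFDerivAt.comp z
      ((hasFDerivAt_id z).add_const c)
    simp only [ContinuousLinearMap.comp_id] at this
    exact this
  rw [h1] at h2
  exact (h2.fderiv).symm ▸ h2.fderiv

lemma gradient_periodic {d : ℕ} {f : EuclideanSpace ℝ (Fin d) → ℝ} (hf : Differentiable ℝ f)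
    (c : EuclideanSpace ℝ (Fin d)) (h : ∀ z, f (z + c) = f z) (z : EuclideanSpace ℝ (Fin d)) :
    gradient f (z + c) = gradient f z := by
  simp only [gradient, fderiv_periodic hf c h z]

lemma gradient_coord_contDiff {d : ℕ} {f : EuclideanSpace ℝ (Fin d) → ℝ}
    (hf : ContDiff ℝ (⊤ : ℕ∞) f) (j : Fin d) :
    ContDiff ℝ (⊤ : ℕ∞) fun z => gradient f z j := by
  have : (fun z => gradient f z j)
      = fun z => (ContinuousLinearMap.apply ℝ ℝ (EuclideanSpace.single j (1:ℝ)))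
          (fderiv ℝ f z) := by
    funext z; rw [gradient_coord]; rfl
  rw [this]
  exact (ContinuousLinearMap.apply ℝ ℝ (EuclideanSpace.single j (1:ℝ))).contDiff.comp
    (hf.fderiv_right (by simp))


lemma step_main {d : ℕ} (hd : 1 ≤ d) (F : Fin d → EuclideanSpace ℝ (Fin d) → ℝ)
    (χ : EuclideanSpace ℝ (Fin d) → ℝ) (hχ_smooth : ContDiff ℝ (⊤ : ℕ∞) χ)
    (hχ_per : ∀ z i, χ (z + EuclideanSpace.single i 1) = χ z)
    (hFs : ∀ i, ContDiff ℝ (⊤ : ℕ∞) (F i))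
    (hFper : ∀ i i' z, F i (z + EuclideanSpace.single i' 1) = F i z)
    (hdiv : ∀ z, ∑ i, fderiv ℝ (F i) z (EuclideanSpace.single i 1) = 0) :
    ∫ z in unitCell d, ∑ i, F i z * gradient χ z i = 0 := by
  have hχd : Differentiable ℝ χ := hχ_smooth.differentiable (by simp)
  have hFd : ∀ i, Differentiable ℝ (F i) := fun i => (hFs i).differentiable (by simp)
  have key := cell_div_integral_zero hd (fun i z => χ z * F i z)
    (fun i => hχ_smooth.mul (hFs i))
    (fun i z => by simp only [hχ_per, hFper])
  rw [← key]
  refine setIntegral_congr_fun (measurableSet_unitCell d) fun z _ => ?_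
  have hterm : ∀ i, fderiv ℝ (fun w => χ w * F i w) z (EuclideanSpace.single i 1)
      = χ z * fderiv ℝ (F i) z (EuclideanSpace.single i 1)
        + F i z * fderiv ℝ χ z (EuclideanSpace.single i 1) := by
    intro i
    rw [fderiv_fun_mul (hχd z) (hFd i z)]
    simp
  simp only [hterm, Finset.sum_add_distrib, ← Finset.mul_sum, hdiv z, mul_zero, zero_add]
  refine Finset.sum_congr rfl fun i _ => ?_
  rw [gradient_coord]


end Aux

/-- Positive definiteness of the effective matrix of periodic homogenization:
if `χ` is a smooth `ℤ^d`-periodic solution of `div(a(z)(∇χ(z) + ξ)) = 0`, then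
`∫ ⟨a(∇χ+ξ), ξ⟩ = ∫ ⟨a(∇χ+ξ), ∇χ+ξ⟩ ≥ λ|ξ|²`. -/
theorem stmt13 (d : ℕ) (hd : 1 ≤ d) (l : ℝ) (hl0 : 0 < l) (hl1 : l ≤ 1)
    (a : EuclideanSpace ℝ (Fin d) → Matrix (Fin d) (Fin d) ℝ)
    (ha_smooth : ∀ i j, ContDiff ℝ (⊤ : ℕ∞) fun z => a z i j)
    (ha_per : ∀ (z : EuclideanSpace ℝ (Fin d)) (i : Fin d),
      a (z + EuclideanSpace.single i 1) = a z)
    (ha_symm : ∀ z, (a z).IsSymm)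
    (ha_ell : ∀ (z ζ : EuclideanSpace ℝ (Fin d)),
      l * ‖ζ‖ ^ 2 ≤ ∑ i, ∑ j, a z i j * ζ i * ζ j ∧
      ∑ i, ∑ j, a z i j * ζ i * ζ j ≤ l⁻¹ * ‖ζ‖ ^ 2)
    (ξ : EuclideanSpace ℝ (Fin d))
    (χ : EuclideanSpace ℝ (Fin d) → ℝ)
    (hχ_smooth : ContDiff ℝ (⊤ : ℕ∞) χ)
    (hχ_per : ∀ (z : EuclideanSpace ℝ (Fin d)) (i : Fin d),
      χ (z + EuclideanSpace.single i 1) = χ z)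
    (hχ_cell : ∀ z : EuclideanSpace ℝ (Fin d),
      ∑ i, fderiv ℝ
        (fun w => ∑ j, a w i j * (gradient χ w j + ξ j)) z
        (EuclideanSpace.single i 1) = 0) :
    (∫ z in unitCell d,
        ∑ i, (∑ j, a z i j * (gradient χ z j + ξ j)) * ξ i)
      = (∫ z in unitCell d,
        ∑ i, (∑ j, a z i j * (gradient χ z j + ξ j)) * (gradient χ z i + ξ i)) ∧
    l * ‖ξ‖ ^ 2 ≤
      ∫ z in unitCell d,
        ∑ i, (∑ j, a z i j * (gradient χ z j + ξ j)) * ξ i := by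
  have hχd : Differentiable ℝ χ := hχ_smooth.differentiable (by simp)
  have hgc : ∀ j, ContDiff ℝ (⊤ : ℕ∞) fun z => gradient χ z j := gradient_coord_contDiff hχ_smooth
  -- smoothness & periodicity of the flux F i w = ∑ j, a w i j * (∇χ w j + ξ j)
  have hFs : ∀ i, ContDiff ℝ (⊤ : ℕ∞) fun w => ∑ j, a w i j * (gradient χ w j + ξ j) :=
    fun i => ContDiff.sum fun j _ => (ha_smooth i j).mul ((hgc j).add contDiff_const)
  have hFper : ∀ i i' z, (fun w => ∑ j, a w i j * (gradient χ w j + ξ j))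
      (z + EuclideanSpace.single i' 1) = ∑ j, a z i j * (gradient χ z j + ξ j) := by
    intro i i' z
    simp only [ha_per, gradient_periodic hχd _ (fun w => hχ_per w i')]
  -- Step A : ∫ ∑ F_i ∂_iχ = 0
  have hA := step_main hd (fun i w => ∑ j, a w i j * (gradient χ w j + ξ j)) χ
    hχ_smooth hχ_per hFs hFper (fun z => hχ_cell z)
  -- Step B : ∫ ∑ ξ_i ∂_iχ = 0
  have hB := step_main hd (fun i _ => ξ i) χ hχ_smooth hχ_per
    (fun i => contDiff_const) (fun i i' z => rfl)
    (fun z => by simp)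
  -- continuity facts
  have hFc : ∀ i, Continuous fun w => ∑ j, a w i j * (gradient χ w j + ξ j) :=
    fun i => (hFs i).continuous
  have hc1 : Continuous fun z => ∑ i, (∑ j, a z i j * (gradient χ z j + ξ j)) * ξ i :=
    continuous_finset_sum _ fun i _ => (hFc i).mul continuous_const
  have hc2 : Continuous fun z =>
      ∑ i, (∑ j, a z i j * (gradient χ z j + ξ j)) * (gradient χ z i + ξ i) :=
    continuous_finset_sum _ fun i _ => (hFc i).mul (((hgc i).continuous).add continuous_const)
  have hc3 : Continuous fun z => ∑ i, (∑ j, a z i j * (gradient χ z j + ξ j)) * gradient χ z i :=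
    continuous_finset_sum _ fun i _ => (hFc i).mul ((hgc i).continuous)
  have hc4 : Continuous fun z => ∑ i, ξ i * gradient χ z i :=
    continuous_finset_sum _ fun i _ => continuous_const.mul ((hgc i).continuous)
  -- the equality
  have hEq : (∫ z in unitCell d, ∑ i, (∑ j, a z i j * (gradient χ z j + ξ j)) * ξ i)
      = ∫ z in unitCell d,
          ∑ i, (∑ j, a z i j * (gradient χ z j + ξ j)) * (gradient χ z i + ξ i) := by
    have hsplit : ∀ z : EuclideanSpace ℝ (Fin d),
        (∑ i, (∑ j, a z i j * (gradient χ z j + ξ j)) * (gradient χ z i + ξ i))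
          = (∑ i, (∑ j, a z i j * (gradient χ z j + ξ j)) * ξ i)
            + ∑ i, (∑ j, a z i j * (gradient χ z j + ξ j)) * gradient χ z i := by
      intro z
      rw [← Finset.sum_add_distrib]
      exact Finset.sum_congr rfl fun i _ => by ring
    rw [setIntegral_congr_fun (measurableSet_unitCell d) fun z _ => hsplit z,
      integral_add (integrableOn_unitCell hc1) (integrableOn_unitCell hc3), hA, add_zero]
  refine ⟨hEq, ?_⟩
  rw [hEq]
  -- pointwise lower bound
  have hpoint : ∀ z ∈ unitCell d,
      l * (2 * (∑ i, ξ i * gradient χ z i) + ‖ξ‖ ^ 2)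
        ≤ ∑ i, (∑ j, a z i j * (gradient χ z j + ξ j)) * (gradient χ z i + ξ i) := by
    intro z _
    set ζ : EuclideanSpace ℝ (Fin d) := gradient χ z + ξ with hζ
    have hζi : ∀ i, ζ i = gradient χ z i + ξ i := fun i => rfl
    have hell := (ha_ell z ζ).1
    have hform : (∑ i, (∑ j, a z i j * (gradient χ z j + ξ j)) * (gradient χ z i + ξ i))
        = ∑ i, ∑ j, a z i j * ζ i * ζ j := by
      rw [Finset.sum_comm]
      refine Finset.sum_congr rfl fun i _ => ?_
      rw [Finset.sum_mul]
      refine Finset.sum_congr rfl fun j _ => ?_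
      simp only [hζi]
      rw [(ha_symm z).apply i j]
    rw [hform]
    refine le_trans ?_ hell
    have hnorm : ‖ζ‖ ^ 2 = ‖gradient χ z‖ ^ 2 + 2 * (∑ i, ξ i * gradient χ z i) + ‖ξ‖ ^ 2 := by
      rw [hζ, norm_add_sq_real]
      have hi : (inner ℝ (gradient χ z) ξ : ℝ) = ∑ i, ξ i * gradient χ z i := by
        rw [PiLp.inner_apply]
        exact Finset.sum_congr rfl fun i _ => by
          simp [RCLike.inner_apply]
      rw [hi]
    rw [hnorm]
    have h0 : 0 ≤ ‖gradient χ z‖ ^ 2 := sq_nonneg _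
    nlinarith [sq_nonneg ‖gradient χ z‖]
  -- integrate the lower bound
  have hrint : IntegrableOn
      (fun z => l * (2 * (∑ i, ξ i * gradient χ z i) + ‖ξ‖ ^ 2)) (unitCell d) :=
    integrableOn_unitCell (continuous_const.mul ((continuous_const.mul hc4).add continuous_const))
  have hmono := setIntegral_mono_on hrint (integrableOn_unitCell hc2)
    (measurableSet_unitCell d) hpoint
  refine le_trans (le_of_eq ?_) hmono
  rw [integral_const_mul]
  rw [integral_add ((integrableOn_unitCell hc4).const_mul 2)
    (integrableOn_const (by rw [volume_unitCell]; exact ENNReal.one_ne_top))]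
  rw [integral_const_mul, hB, setIntegral_const, Measure.real, volume_unitCell]
  simp
end
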